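/- Identification under independent right censoring: let C be a random variable independent of (E₁, E₂, E₃) whose survival function S_C(t) = P(C > t) is continuous. Then the subdistribution of observed (uncensored) intermediate events in the latent-time construction equals the censoring-weighted cumulative incidence: for every t ≥ 0, P(T₁ ≤ t, T₁ < D₀, T₁ ≤ C) = ∫₀ᵗ exp{−Λ₀(s) − Λ⋆(s)} λ⋆(s) S_C(s) ds. -/

import Mathlib

open MeasureTheory ProbabilityTheory Filter Set

/-- Cumulative hazard `Λ(t) = ∫₀ᵗ λ(u) du`. -/
noncomputable def cumHaz (lam : ℝ → ℝ) (t : ℝ) : ℝ := ∫ u in (0:ℝ)..t, lam u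

/-- Post-intermediate cumulative hazard `Λ₁(t,s) = ∫ₛᵗ λ₁(u,s) du`. -/
noncomputable def cumHaz1 (lam1 : ℝ → ℝ → ℝ) (t s : ℝ) : ℝ := ∫ u in s..t, lam1 u s

/-- The counterfactual cumulative incidence function
`F(t) = ∫₀ᵗ e^{−Λ₀(s)−Λ⋆(s)} λ₀(s) ds + ∫₀ᵗ e^{−Λ₀(s)−Λ⋆(s)} λ⋆(s) (1 − e^{−Λ₁(t,s)}) ds`. -/
noncomputable def cif (lamS lam0 : ℝ → ℝ) (lam1 : ℝ → ℝ → ℝ) (t : ℝ) : ℝ :=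
  (∫ s in (0:ℝ)..t, Real.exp (-cumHaz lam0 s - cumHaz lamS s) * lam0 s) +
  ∫ s in (0:ℝ)..t, Real.exp (-cumHaz lam0 s - cumHaz lamS s) * lamS s *
    (1 - Real.exp (-cumHaz1 lam1 t s))

/-!
`T₁` is the hazard-inverse transform `Λ⋆⁻¹(E₁)` of a standard exponential variable, so
`P(T₁ ≤ x) = 1 - exp(-Λ⋆(x))` and `T₁` has density `λ⋆ exp(-Λ⋆)` on `[0, ∞)`; likewise
`P(D₀ > x) = exp(-Λ₀(x))`. By Doob–Dynkin `T₁` and `D₀` are measurable functions of `E₁` and `E₂`,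
so `T₁`, `D₀`, `C` are independent, and conditioning on `T₁ = s` leaves
`P(D₀ > s) P(C ≥ s) = exp(-Λ₀(s)) S_C(s)`, where `P(C ≥ s) = P(C > s)` because a continuous
survival function leaves `C` without atoms.
-/

section CumHaz

variable {lam : ℝ → ℝ}

@[simp]
lemma cumHaz_zero (lam : ℝ → ℝ) : cumHaz lam 0 = 0 :=
  intervalIntegral.integral_same

lemma intervalIntegrable_of_continuousOn_Ici (h : ContinuousOn lam (Ici 0)) {a b : ℝ}
    (ha : 0 ≤ a) (hb : 0 ≤ b) : IntervalIntegrable lam volume a b :=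
  (h.mono fun _ hx => (le_min ha hb).trans hx.1).intervalIntegrable

lemma strictMonoOn_cumHaz (h : ContinuousOn lam (Ici 0)) (hpos : ∀ t ∈ Ici (0:ℝ), 0 < lam t) :
    StrictMonoOn (cumHaz lam) (Ici 0) := by
  intro a ha b hb hab
  have hpos' : 0 < ∫ u in a..b, lam u :=
    intervalIntegral.intervalIntegral_pos_of_pos_on
      (intervalIntegrable_of_continuousOn_Ici h ha hb) (fun x hx => hpos x (ha.trans hx.1.le)) hab
  rw [cumHaz, cumHaz, ← intervalIntegral.integral_add_adjacent_intervals (b := a)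
    (intervalIntegrable_of_continuousOn_Ici h le_rfl ha)
    (intervalIntegrable_of_continuousOn_Ici h ha hb)]
  linarith

lemma cumHaz_nonneg (h : ContinuousOn lam (Ici 0)) (hpos : ∀ t ∈ Ici (0:ℝ), 0 < lam t)
    {b : ℝ} (hb : 0 ≤ b) : 0 ≤ cumHaz lam b := by
  simpa using (strictMonoOn_cumHaz h hpos).monotoneOn self_mem_Ici hb hb

lemma continuousOn_cumHaz_Icc (h : ContinuousOn lam (Ici 0)) {b : ℝ} (hb : 0 ≤ b) :
    ContinuousOn (cumHaz lam) (Icc 0 b) := by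
  have := intervalIntegral.continuousOn_primitive_interval
    (μ := volume) (f := lam) (a := 0) (b := b)
  rw [uIcc_of_le hb] at this
  exact this (h.mono fun _ hx => hx.1).integrableOn_Icc

lemma hasDerivAt_cumHaz (h : ContinuousOn lam (Ici 0)) {x : ℝ} (hx : 0 < x) :
    HasDerivAt (cumHaz lam) (lam x) x :=
  intervalIntegral.integral_hasDerivAt_right
    (intervalIntegrable_of_continuousOn_Ici h le_rfl hx.le)
    ((h.mono Ioi_subset_Ici_self).stronglyMeasurableAtFilter isOpen_Ioi x hx)
    (h.continuousAt (Ici_mem_nhds hx))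

lemma continuousOn_mul_exp_neg_cumHaz (h : ContinuousOn lam (Ici 0)) {b : ℝ} (hb : 0 ≤ b) :
    ContinuousOn (fun u => lam u * Real.exp (-cumHaz lam u)) (Icc 0 b) :=
  (h.mono fun _ hx => hx.1).mul (continuousOn_cumHaz_Icc h hb).neg.rexp

lemma integral_mul_exp_neg_cumHaz (h : ContinuousOn lam (Ici 0)) {b : ℝ} (hb : 0 ≤ b) :
    ∫ u in (0:ℝ)..b, lam u * Real.exp (-cumHaz lam u) = 1 - Real.exp (-cumHaz lam b) := by
  rw [intervalIntegral.integral_eq_sub_of_hasDerivAt_of_le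
    (f := fun u => -Real.exp (-cumHaz lam u)) hb (continuousOn_cumHaz_Icc h hb).neg.rexp.neg
    (fun x hx => by simpa [mul_comm] using (hasDerivAt_cumHaz h hx.1).fun_neg.exp.fun_neg)
    ((continuousOn_mul_exp_neg_cumHaz h hb).intervalIntegrable_of_Icc hb)]
  simp only [cumHaz_zero, neg_zero, Real.exp_zero]
  ring

end CumHaz

section InverseTransform

variable {Ω : Type*} {Λ : ℝ → ℝ} {E T : Ω → ℝ}

lemma preimage_Iic_eq_of_strictMonoOn (hΛ : StrictMonoOn Λ (Ici 0))
    (hT : ∀ ω, 0 ≤ T ω ∧ Λ (T ω) = E ω) {x : ℝ} (hx : 0 ≤ x) :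
    T ⁻¹' Iic x = E ⁻¹' Iic (Λ x) := by
  ext ω
  simp only [mem_preimage, mem_Iic, ← (hT ω).2]
  exact (hΛ.le_iff_le (hT ω).1 hx).symm

lemma preimage_Ioi_eq_of_strictMonoOn (hΛ : StrictMonoOn Λ (Ici 0))
    (hT : ∀ ω, 0 ≤ T ω ∧ Λ (T ω) = E ω) {x : ℝ} (hx : 0 ≤ x) :
    T ⁻¹' Ioi x = E ⁻¹' Ioi (Λ x) := by
  rw [← compl_Iic, ← compl_Iic, preimage_compl, preimage_compl,
    preimage_Iic_eq_of_strictMonoOn hΛ hT hx]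

lemma exists_measurable_comp_eq_of_strictMonoOn (hΛ : StrictMonoOn Λ (Ici 0))
    (hT : ∀ ω, 0 ≤ T ω ∧ Λ (T ω) = E ω) :
    ∃ g : ℝ → ℝ, Measurable g ∧ T = g ∘ E := by
  refine Measurable.exists_eq_measurable_comp (measurable_of_Iic fun x => ?_)
  rcases lt_or_ge x 0 with hx | hx
  · convert MeasurableSet.empty
    exact eq_empty_of_forall_notMem fun ω hω => hx.not_ge ((hT ω).1.trans hω)
  · rw [preimage_Iic_eq_of_strictMonoOn hΛ hT hx]
    exact ⟨_, measurableSet_Iic, rfl⟩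

end InverseTransform

lemma expMeasure_Ioi {r a : ℝ} (hr : 0 < r) (ha : 0 ≤ a) :
    expMeasure r (Ioi a) = ENNReal.ofReal (Real.exp (-(r * a))) := by
  have := isProbabilityMeasure_expMeasure hr
  have hexp : Real.exp (-(r * a)) ≤ 1 :=
    Real.exp_le_one_iff.2 (neg_nonpos.2 (mul_nonneg hr.le ha))
  rw [← compl_Iic, prob_compl_eq_one_sub measurableSet_Iic, ← ofReal_cdf, cdf_expMeasure_eq hr,
    if_pos ha, ← ENNReal.ofReal_one, ← ENNReal.ofReal_sub _ (by linarith), sub_sub_cancel]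

lemma measure_Ici_eq_measure_Ioi_of_continuous {μ : Measure ℝ} [IsProbabilityMeasure μ]
    (h : Continuous fun x => μ.real (Ioi x)) (a : ℝ) : μ (Ici a) = μ (Ioi a) := by
  have hcdf : Continuous (cdf μ) := by
    have : cdf μ = fun x => 1 - μ.real (Ioi x) := funext fun x => by
      rw [cdf_eq_real, ← compl_Iic, measureReal_compl measurableSet_Iic, probReal_univ,
        sub_sub_cancel]
    rw [this]
    exact continuous_const.sub h
  refine measure_congr (Ioi_ae_eq_Ici' ?_).symm
  rw [← measure_cdf μ, StieltjesFunction.measure_singleton,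
    ← (monotone_cdf μ).continuousWithinAt_Iio_iff_leftLim_eq.1 hcdf.continuousWithinAt,
    sub_self, ENNReal.ofReal_zero]

lemma map_Ici_eq_ofReal_of_continuous {Ω : Type*} [MeasurableSpace Ω] {P : Measure Ω}
    [IsProbabilityMeasure P] {C : Ω → ℝ} (hC : Measurable C) {S : ℝ → ℝ}
    (hS : ∀ t, S t = (P {ω | t < C ω}).toReal) (hcont : Continuous S) (x : ℝ) :
    P.map C (Ici x) = ENNReal.ofReal (S x) := by
  have := Measure.isProbabilityMeasure_map (μ := P) hC.aemeasurable
  have hreal : ∀ x, (P.map C).real (Ioi x) = S x := fun x => by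
    rw [hS, measureReal_def, Measure.map_apply hC measurableSet_Ioi]
    rfl
  rw [measure_Ici_eq_measure_Ioi_of_continuous (by simpa only [hreal] using hcont), ← hreal,
    ofReal_measureReal]

section HazardLaw

variable {Ω : Type*} [MeasurableSpace Ω] {P : Measure Ω}
  {lam : ℝ → ℝ} {E T : Ω → ℝ}

lemma map_eq_withDensity_of_cumHaz_eq [IsFiniteMeasure P] (hcont : ContinuousOn lam (Ici 0))
    (hpos : ∀ t ∈ Ici (0:ℝ), 0 < lam t) (hE : Measurable E) (hlaw : P.map E = expMeasure 1)
    (hT : ∀ ω, 0 ≤ T ω ∧ cumHaz lam (T ω) = E ω) :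
    P.map T = (volume.restrict (Ici 0)).withDensity
      fun x => ENNReal.ofReal (lam x * Real.exp (-cumHaz lam x)) := by
  have := isProbabilityMeasure_expMeasure one_pos
  have hmono := strictMonoOn_cumHaz hcont hpos
  obtain ⟨g, hg, hTg⟩ := exists_measurable_comp_eq_of_strictMonoOn hmono hT
  have hTm : Measurable T := hTg ▸ hg.comp hE
  refine Measure.ext_of_Iic _ _ fun x => ?_
  rw [Measure.map_apply hTm measurableSet_Iic, withDensity_apply _ measurableSet_Iic,
    Measure.restrict_restrict measurableSet_Iic, Iic_inter_Ici]
  rcases lt_or_ge x 0 with hx | hx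
  · rw [Icc_eq_empty hx.not_ge, Measure.restrict_empty, lintegral_zero_measure]
    exact measure_mono_null (fun ω hω => hx.not_ge ((hT ω).1.trans hω)) measure_empty
  · rw [preimage_Iic_eq_of_strictMonoOn hmono hT hx, ← Measure.map_apply hE measurableSet_Iic,
      hlaw, ← ofReal_cdf, cdf_expMeasure_eq one_pos, if_pos (cumHaz_nonneg hcont hpos hx),
      one_mul, ← integral_mul_exp_neg_cumHaz hcont hx,
      intervalIntegral.integral_of_le hx, ← integral_Icc_eq_integral_Ioc,
      ofReal_integral_eq_lintegral_ofReal
        ((continuousOn_mul_exp_neg_cumHaz hcont hx).integrableOn_Icc)]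
    refine (ae_restrict_iff' measurableSet_Icc).2 (ae_of_all _ fun u hu => ?_)
    exact mul_nonneg (hpos u hu.1).le (Real.exp_pos _).le

lemma map_Ioi_eq_of_cumHaz_eq (hcont : ContinuousOn lam (Ici 0))
    (hpos : ∀ t ∈ Ici (0:ℝ), 0 < lam t) (hE : Measurable E) (hT : Measurable T)
    (hlaw : P.map E = expMeasure 1) (hTE : ∀ ω, 0 ≤ T ω ∧ cumHaz lam (T ω) = E ω)
    {x : ℝ} (hx : 0 ≤ x) : P.map T (Ioi x) = ENNReal.ofReal (Real.exp (-cumHaz lam x)) := by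
  rw [Measure.map_apply hT measurableSet_Ioi,
    preimage_Ioi_eq_of_strictMonoOn (strictMonoOn_cumHaz hcont hpos) hTE hx,
    ← Measure.map_apply hE measurableSet_Ioi, hlaw,
    expMeasure_Ioi one_pos (cumHaz_nonneg hcont hpos hx), one_mul]

end HazardLaw

lemma measure_le_lt_le_eq_setLIntegral {Ω : Type*} [MeasurableSpace Ω] {P : Measure Ω}
    [IsFiniteMeasure P] {X Y Z : Ω → ℝ} (hX : Measurable X) (hY : Measurable Y)
    (hZ : Measurable Z) (hXY : IndepFun X Y P) (hXYZ : IndepFun (fun ω => (X ω, Y ω)) Z P)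
    (t : ℝ) :
    P {ω | X ω ≤ t ∧ X ω < Y ω ∧ X ω ≤ Z ω} =
      ∫⁻ x in Iic t, P.map Y (Ioi x) * P.map Z (Ici x) ∂P.map X := by
  have hlaw :
      P.map (fun ω => (X ω, (Y ω, Z ω))) = (P.map X).prod ((P.map Y).prod (P.map Z)) := by
    rw [← Measure.prodAssoc_prod, ← (indepFun_iff_map_prod_eq_prod_map_map hX.aemeasurable
      hY.aemeasurable).1 hXY, ← (indepFun_iff_map_prod_eq_prod_map_map (hX.prodMk hY).aemeasurable
      hZ.aemeasurable).1 hXYZ, Measure.map_map MeasurableEquiv.prodAssoc.measurable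
      ((hX.prodMk hY).prodMk hZ)]
    rfl
  set A : Set (ℝ × ℝ × ℝ) := {q | q.1 ≤ t ∧ q.1 < q.2.1 ∧ q.1 ≤ q.2.2}
  have hA : MeasurableSet A :=
    (measurableSet_le measurable_fst measurable_const).inter
      ((measurableSet_lt measurable_fst (measurable_fst.comp measurable_snd)).inter
        (measurableSet_le measurable_fst (measurable_snd.comp measurable_snd)))
  have hslice : ∀ x, (P.map Y).prod (P.map Z) (Prod.mk x ⁻¹' A) =
      (Iic t).indicator (fun x => P.map Y (Ioi x) * P.map Z (Ici x)) x := by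
    intro x
    by_cases hx : x ≤ t
    · rw [indicator_of_mem (mem_Iic.2 hx), ← Measure.prod_prod]
      congr 1
      ext q
      simp [A, hx]
    · rw [indicator_of_notMem (notMem_Iic.2 (not_le.1 hx))]
      have hempty : Prod.mk x ⁻¹' A = ∅ := by
        ext q
        simp [A, hx]
      rw [hempty, measure_empty]
  change P ((fun ω => (X ω, (Y ω, Z ω))) ⁻¹' A) = _
  rw [← Measure.map_apply (hX.prodMk (hY.prodMk hZ)) hA, hlaw, Measure.prod_apply hA,
    lintegral_congr hslice, lintegral_indicator measurableSet_Iic]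

lemma setLIntegral_Iic_withDensity_restrict_Ici {φ : ℝ → ℝ} {t : ℝ}
    (hφ : ContinuousOn φ (Icc 0 t)) (F : ℝ → ENNReal) :
    ∫⁻ x in Iic t, F x
        ∂(volume.restrict (Ici 0)).withDensity (fun x => ENNReal.ofReal (φ x)) =
      ∫⁻ x in Icc 0 t, ENNReal.ofReal (φ x) * F x := by
  rw [restrict_withDensity measurableSet_Iic, Measure.restrict_restrict measurableSet_Iic,
    Iic_inter_Ici, lintegral_withDensity_eq_lintegral_mul_non_measurable₀ _
      (hφ.aemeasurable measurableSet_Icc).ennreal_ofReal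
      (ae_of_all _ fun _ => ENNReal.ofReal_lt_top)]
  rfl

theorem latent_censored_identification_general
    {Ω : Type*} [MeasurableSpace Ω] (P : Measure Ω) [IsProbabilityMeasure P]
    (lamS lam0 : ℝ → ℝ)
    (hScont : ContinuousOn lamS (Set.Ici 0))
    (h0cont : ContinuousOn lam0 (Set.Ici 0))
    (hSpos : ∀ t ∈ Set.Ici (0:ℝ), 0 < lamS t)
    (h0pos : ∀ t ∈ Set.Ici (0:ℝ), 0 < lam0 t)
    (E1 E2 E3 : Ω → ℝ)
    (hE1m : Measurable E1) (hE2m : Measurable E2)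
    (hindep : iIndepFun (m := fun _ => Real.measurableSpace) ![E1, E2, E3] P)
    (hE1d : P.map E1 = expMeasure 1)
    (hE2d : P.map E2 = expMeasure 1)
    (T1 D0 : Ω → ℝ)
    (hT1 : ∀ ω, 0 ≤ T1 ω ∧ cumHaz lamS (T1 ω) = E1 ω)
    (hD0 : ∀ ω, 0 ≤ D0 ω ∧ cumHaz lam0 (D0 ω) = E2 ω)
    (C : Ω → ℝ) (hCm : Measurable C)
    (hCindep : IndepFun (fun ω => (E1 ω, E2 ω, E3 ω)) C P)
    (SC : ℝ → ℝ)
    (hSC : ∀ t : ℝ, SC t = (P {ω | t < C ω}).toReal)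
    (hSCcont : Continuous SC) :
    ∀ t : ℝ, 0 ≤ t →
      P {ω | T1 ω ≤ t ∧ T1 ω < D0 ω ∧ T1 ω ≤ C ω} =
        ENNReal.ofReal
          (∫ s in (0:ℝ)..t,
            Real.exp (-cumHaz lam0 s - cumHaz lamS s) * lamS s * SC s) := by
  intro t ht
  obtain ⟨g1, hg1, hT1g⟩ :=
    exists_measurable_comp_eq_of_strictMonoOn (strictMonoOn_cumHaz hScont hSpos) hT1
  obtain ⟨g0, hg0, hD0g⟩ :=
    exists_measurable_comp_eq_of_strictMonoOn (strictMonoOn_cumHaz h0cont h0pos) hD0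
  have hT1D0 : IndepFun T1 D0 P := by
    rw [hT1g, hD0g]
    exact (hindep.indepFun (show (0 : Fin 3) ≠ 1 by decide)).comp hg1 hg0
  have hT1D0C : IndepFun (fun ω => (T1 ω, D0 ω)) C P := by
    rw [hT1g, hD0g]
    exact hCindep.comp ((hg1.comp measurable_fst).prodMk
      (hg0.comp (measurable_fst.comp measurable_snd))) measurable_id
  have hD0m : Measurable D0 := hD0g ▸ hg0.comp hE2m
  have hcont :
      ContinuousOn (fun s => Real.exp (-cumHaz lam0 s - cumHaz lamS s) * lamS s * SC s)
        (Icc 0 t) :=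
    (((continuousOn_cumHaz_Icc h0cont ht).neg.sub (continuousOn_cumHaz_Icc hScont ht)).rexp.mul
      (hScont.mono fun _ hx => hx.1)).mul hSCcont.continuousOn
  rw [measure_le_lt_le_eq_setLIntegral (hT1g ▸ hg1.comp hE1m) hD0m hCm hT1D0 hT1D0C,
    map_eq_withDensity_of_cumHaz_eq hScont hSpos hE1m hE1d hT1,
    setLIntegral_Iic_withDensity_restrict_Ici (continuousOn_mul_exp_neg_cumHaz hScont ht),
    intervalIntegral.integral_of_le ht, ← integral_Icc_eq_integral_Ioc,
    ofReal_integral_eq_lintegral_ofReal hcont.integrableOn_Icc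
      ((ae_restrict_iff' measurableSet_Icc).2 (ae_of_all _ fun x hx =>
        mul_nonneg (mul_nonneg (Real.exp_pos _).le (hSpos x hx.1).le)
          (hSC x ▸ ENNReal.toReal_nonneg)))]
  refine setLIntegral_congr_fun measurableSet_Icc fun x hx => ?_
  rw [map_Ioi_eq_of_cumHaz_eq h0cont h0pos hE2m hD0m hE2d hD0 hx.1,
    map_Ici_eq_ofReal_of_continuous hCm hSC hSCcont, ← ENNReal.ofReal_mul (Real.exp_pos _).le,
    ← ENNReal.ofReal_mul (mul_nonneg (hSpos x hx.1).le (Real.exp_pos _).le), sub_eq_add_neg,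
    Real.exp_add]
  congr 1
  ring

/-- identification under independent right censoring: for a censoring
time `C` independent of `(E₁,E₂,E₃)` with continuous survival function `S_C`,
`P(T₁ ≤ t, T₁ < D₀, T₁ ≤ C) = ∫₀ᵗ exp(−Λ₀(s)−Λ⋆(s)) λ⋆(s) S_C(s) ds`. -/
theorem latent_censored_identification
    {Ω : Type*} [MeasurableSpace Ω] (P : Measure Ω) [IsProbabilityMeasure P]
    (lamS lam0 : ℝ → ℝ) (lam1 : ℝ → ℝ → ℝ)
    (hScont : ContinuousOn lamS (Set.Ici 0))
    (h0cont : ContinuousOn lam0 (Set.Ici 0))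
    (h1cont : ContinuousOn (fun p : ℝ × ℝ => lam1 p.1 p.2) {p : ℝ × ℝ | 0 ≤ p.2 ∧ p.2 ≤ p.1})
    (hSpos : ∀ t ∈ Set.Ici (0:ℝ), 0 < lamS t)
    (h0pos : ∀ t ∈ Set.Ici (0:ℝ), 0 < lam0 t)
    (h1nn : ∀ s t : ℝ, 0 ≤ s → s ≤ t → 0 ≤ lam1 t s)
    (hStop : Tendsto (cumHaz lamS) atTop atTop)
    (h0top : Tendsto (cumHaz lam0) atTop atTop)
    (h1mono : ∀ s : ℝ, 0 ≤ s → StrictMonoOn (fun t => cumHaz1 lam1 t s) (Set.Ici s))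
    (h1top : ∀ s : ℝ, 0 ≤ s → Tendsto (fun t => cumHaz1 lam1 t s) atTop atTop)
    (E1 E2 E3 : Ω → ℝ)
    (hE1m : Measurable E1) (hE2m : Measurable E2) (hE3m : Measurable E3)
    (hindep : iIndepFun (m := fun _ => Real.measurableSpace) ![E1, E2, E3] P)
    (hE1d : P.map E1 = expMeasure 1)
    (hE2d : P.map E2 = expMeasure 1)
    (hE3d : P.map E3 = expMeasure 1)
    (T1 D0 T2 : Ω → ℝ)
    (hT1 : ∀ ω, 0 ≤ T1 ω ∧ cumHaz lamS (T1 ω) = E1 ω)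
    (hD0 : ∀ ω, 0 ≤ D0 ω ∧ cumHaz lam0 (D0 ω) = E2 ω)
    (hT2a : ∀ ω, D0 ω ≤ T1 ω → T2 ω = D0 ω)
    (hT2b : ∀ ω, T1 ω < D0 ω → T1 ω ≤ T2 ω ∧ cumHaz1 lam1 (T2 ω) (T1 ω) = E3 ω)
    (C : Ω → ℝ) (hCm : Measurable C)
    (hCindep : IndepFun (fun ω => (E1 ω, E2 ω, E3 ω)) C P)
    (SC : ℝ → ℝ)
    (hSC : ∀ t : ℝ, SC t = (P {ω | t < C ω}).toReal)
    (hSCcont : Continuous SC) :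
    ∀ t : ℝ, 0 ≤ t →
      P {ω | T1 ω ≤ t ∧ T1 ω < D0 ω ∧ T1 ω ≤ C ω} =
        ENNReal.ofReal
          (∫ s in (0:ℝ)..t,
            Real.exp (-cumHaz lam0 s - cumHaz lamS s) * lamS s * SC s) :=
  latent_censored_identification_general P lamS lam0 hScont h0cont hSpos h0pos E1 E2 E3 hE1m hE2m
    hindep hE1d hE2d T1 D0 hT1 hD0 C hCm hCindep SC hSC hSCcont
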